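/- Let {E_j} be a chiral family covering a square Q with integer corners, and suppose R(n) is a member of the family with R(n) ⊂ Q. Then for every t ∈ ℕ such that R(n + t(1,-1)) ⊂ Q', where Q' is the square of side length two more than Q with the same center, the translate R(n + t(1,-1)) is also a member of the family. -/
import Mathlib


open MeasureTheory Set Filter
open scoped ENNReal

noncomputable section

/-- The basic R-shaped chiral molecule. -/
def Rbase : Set (ℝ × ℝ) := (Icc (0:ℝ) 1 ×ˢ Icc (0:ℝ) 3) ∪ (Icc (1:ℝ) 2 ×ˢ Icc (2:ℝ) 3)

/-- The basic S-shaped (mirror) chiral molecule. -/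
def Sbase : Set (ℝ × ℝ) := (Icc (-1:ℝ) 0 ×ˢ Icc (0:ℝ) 3) ∪ (Icc (-2:ℝ) (-1) ×ˢ Icc (2:ℝ) 3)

/-- Translation of a subset of the plane by a vector. -/
def trSet (v : ℝ × ℝ) (A : Set (ℝ × ℝ)) : Set (ℝ × ℝ) :=
  (fun x => (v.1 + x.1, v.2 + x.2)) '' A

/-- Integer translate of the R molecule. -/
def Rmol (n : ℤ × ℤ) : Set (ℝ × ℝ) := trSet ((n.1 : ℝ), (n.2 : ℝ)) Rbase

/-- Integer translate of the S molecule. -/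
def Smol (n : ℤ × ℤ) : Set (ℝ × ℝ) := trSet ((n.1 : ℝ), (n.2 : ℝ)) Sbase

/-- A set is a molecule if it is an integer translate of R or of S. -/
def IsMolecule (E : Set (ℝ × ℝ)) : Prop := ∃ n : ℤ × ℤ, E = Rmol n ∨ E = Smol n

/-- A chiral family: molecules with pairwise Lebesgue-null intersections. -/
def ChiralFamily (F : Set (Set (ℝ × ℝ))) : Prop :=
  (∀ E ∈ F, IsMolecule E) ∧ ∀ E ∈ F, ∀ E' ∈ F, E ≠ E' → volume (E ∩ E') = 0

/-- The eight modulated phases `𝒵_i`, `i = 1, ..., 8`. -/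
def Zphase (i : ℕ) : Set (Set (ℝ × ℝ)) :=
  if i ≤ 4 then {E | ∃ n : ℤ × ℤ, E = Rmol n ∧ (n.2 + n.1) % 4 = (i : ℤ) % 4}
  else {E | ∃ n : ℤ × ℤ, E = Smol n ∧ (n.2 - n.1) % 4 = ((i : ℤ) - 4) % 4}

/-- Open axis-parallel square of side `r` centered at `x`. -/
def osq (r : ℝ) (x : ℝ × ℝ) : Set (ℝ × ℝ) :=
  Ioo (x.1 - r / 2) (x.1 + r / 2) ×ˢ Ioo (x.2 - r / 2) (x.2 + r / 2)

/-- Euclidean norm on the plane. -/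
def enr (x : ℝ × ℝ) : ℝ := Real.sqrt (x.1 ^ 2 + x.2 ^ 2)

lemma mem_trSet {v : ℝ × ℝ} {A : Set (ℝ × ℝ)} {x : ℝ × ℝ} :
    x ∈ trSet v A ↔ (x.1 - v.1, x.2 - v.2) ∈ A := by
  constructor
  · rintro ⟨y, hy, rfl⟩; simpa using hy
  · intro h; exact ⟨_, h, by simp⟩

lemma mem_Rmol {n : ℤ × ℤ} {x : ℝ × ℝ} :
    x ∈ Rmol n ↔ (((n.1:ℝ) ≤ x.1 ∧ x.1 ≤ n.1+1 ∧ (n.2:ℝ) ≤ x.2 ∧ x.2 ≤ n.2+3) ∨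
      ((n.1:ℝ)+1 ≤ x.1 ∧ x.1 ≤ n.1+2 ∧ (n.2:ℝ)+2 ≤ x.2 ∧ x.2 ≤ n.2+3)) := by
  rw [Rmol, mem_trSet]
  simp only [Rbase, mem_union, mem_prod, mem_Icc]
  constructor
  · rintro (⟨⟨a,b⟩,c,d⟩|⟨⟨a,b⟩,c,d⟩) <;> [left; right] <;>
      exact ⟨by linarith, by linarith, by linarith, by linarith⟩
  · rintro (⟨a,b,c,d⟩|⟨a,b,c,d⟩) <;> [left; right] <;>
      exact ⟨⟨by linarith, by linarith⟩, by linarith, by linarith⟩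

lemma mem_Smol {n : ℤ × ℤ} {x : ℝ × ℝ} :
    x ∈ Smol n ↔ (((n.1:ℝ)-1 ≤ x.1 ∧ x.1 ≤ n.1 ∧ (n.2:ℝ) ≤ x.2 ∧ x.2 ≤ n.2+3) ∨
      ((n.1:ℝ)-2 ≤ x.1 ∧ x.1 ≤ n.1-1 ∧ (n.2:ℝ)+2 ≤ x.2 ∧ x.2 ≤ n.2+3)) := by
  rw [Smol, mem_trSet]
  simp only [Sbase, mem_union, mem_prod, mem_Icc]
  constructor
  · rintro (⟨⟨a,b⟩,c,d⟩|⟨⟨a,b⟩,c,d⟩) <;> [left; right] <;>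
      exact ⟨by linarith, by linarith, by linarith, by linarith⟩
  · rintro (⟨a,b,c,d⟩|⟨a,b,c,d⟩) <;> [left; right] <;>
      exact ⟨⟨by linarith, by linarith⟩, by linarith, by linarith⟩

/-- helper: integer vs half-integer comparisons -/
lemma int_le_half {p a : ℤ} : (p:ℝ) ≤ (a:ℝ) + 1/2 ↔ p ≤ a := by
  constructor
  · intro h
    have h2 : (p:ℝ) < (a:ℝ) + 1 := by linarith
    have : p < a + 1 := by exact_mod_cast h2
    omega
  · intro h
    have : (p:ℝ) ≤ (a:ℝ) := by exact_mod_cast h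
    linarith

lemma half_le_int {p a : ℤ} : (a:ℝ) + 1/2 ≤ (p:ℝ) ↔ a + 1 ≤ p := by
  constructor
  · intro h
    have h2 : (a:ℝ) < (p:ℝ) := by linarith
    have : a < p := by exact_mod_cast h2
    omega
  · intro h
    have : (a:ℝ) + 1 ≤ (p:ℝ) := by exact_mod_cast h
    linarith

/-- classification of molecules containing a half-integer point -/
lemma Rmol_half {q : ℤ × ℤ} {a b : ℤ} :
    ((a:ℝ)+1/2, (b:ℝ)+1/2) ∈ Rmol q ↔
      (q = (a, b) ∨ q = (a, b-1) ∨ q = (a, b-2) ∨ q = (a-1, b-2)) := by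
  obtain ⟨q1, q2⟩ := q
  rw [mem_Rmol]
  simp only [Prod.mk.injEq]
  constructor
  · rintro (⟨h1, h2, h3, h4⟩ | ⟨h1, h2, h3, h4⟩)
    · have e1 : q1 ≤ a := int_le_half.mp h1
      have e2 : a + 1 ≤ q1 + 1 := half_le_int.mp (by push_cast at h2 ⊢; linarith)
      have e3 : q2 ≤ b := int_le_half.mp h3
      have e4 : b + 1 ≤ q2 + 3 := half_le_int.mp (by push_cast at h4 ⊢; linarith)
      omega
    · have e1 : q1 + 1 ≤ a := int_le_half.mp (by push_cast at h1 ⊢; linarith)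
      have e2 : a + 1 ≤ q1 + 2 := half_le_int.mp (by push_cast at h2 ⊢; linarith)
      have e3 : q2 + 2 ≤ b := int_le_half.mp (by push_cast at h3 ⊢; linarith)
      have e4 : b + 1 ≤ q2 + 3 := half_le_int.mp (by push_cast at h4 ⊢; linarith)
      omega
  · rintro (⟨rfl, rfl⟩ | ⟨rfl, rfl⟩ | ⟨rfl, rfl⟩ | ⟨rfl, rfl⟩) <;>
      [left; left; left; right] <;> push_cast <;>
      exact ⟨by linarith, by linarith, by linarith, by linarith⟩

lemma Smol_half {q : ℤ × ℤ} {a b : ℤ} :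
    ((a:ℝ)+1/2, (b:ℝ)+1/2) ∈ Smol q ↔
      (q = (a+1, b) ∨ q = (a+1, b-1) ∨ q = (a+1, b-2) ∨ q = (a+2, b-2)) := by
  obtain ⟨q1, q2⟩ := q
  rw [mem_Smol]
  simp only [Prod.mk.injEq]
  constructor
  · rintro (⟨h1, h2, h3, h4⟩ | ⟨h1, h2, h3, h4⟩)
    · have e1 : q1 ≤ a + 1 := int_le_half.mp (by push_cast at h1 ⊢; linarith)
      have e2 : a + 1 ≤ q1 := half_le_int.mp (by push_cast at h2 ⊢; linarith)
      have e3 : q2 ≤ b := int_le_half.mp h3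
      have e4 : b + 1 ≤ q2 + 3 := half_le_int.mp (by push_cast at h4 ⊢; linarith)
      omega
    · have e1 : q1 ≤ a + 2 := int_le_half.mp (by push_cast at h1 ⊢; linarith)
      have e2 : a + 1 ≤ q1 - 1 := half_le_int.mp (by push_cast at h2 ⊢; linarith)
      have e3 : b + 1 ≤ q2 + 3 := half_le_int.mp (by push_cast at h4 ⊢; linarith)
      have e4 : q2 + 2 ≤ b := int_le_half.mp (by push_cast at h3 ⊢; linarith)
      omega
  · rintro (⟨rfl, rfl⟩ | ⟨rfl, rfl⟩ | ⟨rfl, rfl⟩ | ⟨rfl, rfl⟩) <;>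
      [left; left; left; right] <;> push_cast <;>
      exact ⟨by linarith, by linarith, by linarith, by linarith⟩

/-- unit grid cell -/
def cell (a b : ℤ) : Set (ℝ × ℝ) := Icc (a:ℝ) (a+1) ×ˢ Icc (b:ℝ) (b+1)

lemma volume_cell (a b : ℤ) : volume (cell a b) = 1 := by
  rw [cell, Measure.volume_eq_prod, Measure.prod_prod, Real.volume_Icc, Real.volume_Icc]
  norm_num

lemma cell_sub_R {q : ℤ × ℤ} {a b : ℤ}
    (h : (a = q.1 ∧ (b = q.2 ∨ b = q.2 + 1 ∨ b = q.2 + 2)) ∨ (a = q.1 + 1 ∧ b = q.2 + 2)) :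
    cell a b ⊆ Rmol q := by
  rintro ⟨x1, x2⟩ ⟨⟨u1, u2⟩, u3, u4⟩
  simp only [mem_Icc] at *
  rw [mem_Rmol]
  have ha : (a:ℝ) = a := rfl
  rcases h with ⟨h1, h2 | h2 | h2⟩ | ⟨h1, h2⟩ <;>
    [left; left; left; right] <;>
    subst h1 <;> subst h2 <;> push_cast at * <;>
    exact ⟨by linarith, by linarith, by linarith, by linarith⟩

lemma cell_sub_S {q : ℤ × ℤ} {a b : ℤ}
    (h : (a = q.1 - 1 ∧ (b = q.2 ∨ b = q.2 + 1 ∨ b = q.2 + 2)) ∨ (a = q.1 - 2 ∧ b = q.2 + 2)) :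
    cell a b ⊆ Smol q := by
  rintro ⟨x1, x2⟩ ⟨⟨u1, u2⟩, u3, u4⟩
  simp only [mem_Icc] at *
  rw [mem_Smol]
  rcases h with ⟨h1, h2 | h2 | h2⟩ | ⟨h1, h2⟩ <;>
    [left; left; left; right] <;>
    subst h1 <;> subst h2 <;> push_cast at * <;>
    exact ⟨by linarith, by linarith, by linarith, by linarith⟩

lemma no_overlap {F : Set (Set (ℝ × ℝ))} (hF : ChiralFamily F) {E E' : Set (ℝ × ℝ)}
    (hE : E ∈ F) (hE' : E' ∈ F) (hne : E ≠ E') (a b : ℤ)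
    (h1 : cell a b ⊆ E) (h2 : cell a b ⊆ E') : False := by
  have h0 := hF.2 E hE E' hE' hne
  have : volume (cell a b) = 0 :=
    measure_mono_null (subset_inter h1 h2) h0
  rw [volume_cell] at this
  exact one_ne_zero this

/-- One diagonal step of propagation. -/
lemma step {F : Set (Set (ℝ × ℝ))} (hF : ChiralFamily F) (p1 p2 : ℤ)
    (hp : Rmol (p1, p2) ∈ F)
    (hx : ((((p1+1:ℤ)):ℝ)+1/2, (((p2+1:ℤ)):ℝ)+1/2) ∈ ⋃₀ F)
    (hy : ((((p1+1:ℤ)):ℝ)+1/2, ((p2:ℤ):ℝ)+1/2) ∈ ⋃₀ F) :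
    Rmol (p1+1, p2-1) ∈ F := by
  obtain ⟨E, hEF, hxE⟩ := hx
  have hxnotp : ((((p1+1:ℤ)):ℝ)+1/2, (((p2+1:ℤ)):ℝ)+1/2) ∉ Rmol (p1, p2) := by
    intro hmem; rw [Rmol_half] at hmem; simp only [Prod.mk.injEq] at hmem; omega
  obtain ⟨q, (rfl | rfl)⟩ := hF.1 E hEF
  · -- E is an R-molecule
    have hne : Rmol q ≠ Rmol (p1, p2) := fun h => hxnotp (h ▸ hxE)
    rcases Rmol_half.mp hxE with rfl | rfl | rfl | rfl
    · exact (no_overlap hF hEF hp hne (p1+1) (p2+2)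
          (cell_sub_R (by first | (simp; omega) | simp)) (cell_sub_R (by first | (simp; omega) | simp))).elim
    · exact (no_overlap hF hEF hp hne (p1+1) (p2+2)
          (cell_sub_R (by first | (simp; omega) | simp)) (cell_sub_R (by first | (simp; omega) | simp))).elim
    · have h2 : (p2+1-2 : ℤ) = p2-1 := by omega
      rw [h2] at hEF; exact hEF
    · exact (no_overlap hF hEF hp hne p1 p2
          (cell_sub_R (by first | (simp; omega) | simp)) (cell_sub_R (by first | (simp; omega) | simp))).elim
  · -- E is an S-molecule
    have hne : Smol q ≠ Rmol (p1, p2) := fun h => hxnotp (h ▸ hxE)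
    rcases Smol_half.mp hxE with rfl | rfl | rfl | rfl
    · exact (no_overlap hF hEF hp hne (p1+1) (p2+2)
          (cell_sub_S (by first | (simp; omega) | simp)) (cell_sub_R (by first | (simp; omega) | simp))).elim
    · exact (no_overlap hF hEF hp hne (p1+1) (p2+2)
          (cell_sub_S (by first | (simp; omega) | simp)) (cell_sub_R (by first | (simp; omega) | simp))).elim
    · exact (no_overlap hF hEF hp hne p1 (p2+1)
          (cell_sub_S (by first | (simp; omega) | simp)) (cell_sub_R (by first | (simp; omega) | simp))).elim
    · -- E = Smol (p1+2+1, p2+1-2); use the second point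
      exfalso
      obtain ⟨E', hE'F, hyE'⟩ := hy
      have hynotp : ((((p1+1:ℤ)):ℝ)+1/2, ((p2:ℤ):ℝ)+1/2) ∉ Rmol (p1, p2) := by
        intro hmem; rw [Rmol_half] at hmem; simp only [Prod.mk.injEq] at hmem; omega
      have hynotE : ((((p1+1:ℤ)):ℝ)+1/2, ((p2:ℤ):ℝ)+1/2) ∉ Smol (p1+1+2, p2+1-2) := by
        intro hmem; rw [Smol_half] at hmem; simp only [Prod.mk.injEq] at hmem; omega
      obtain ⟨q', (rfl | rfl)⟩ := hF.1 E' hE'F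
      · have hneP : Rmol q' ≠ Rmol (p1, p2) := fun h => hynotp (h ▸ hyE')
        have hneE : Rmol q' ≠ Smol (p1+1+2, p2+1-2) := fun h => hynotE (h ▸ hyE')
        rcases Rmol_half.mp hyE' with rfl | rfl | rfl | rfl
        · exact no_overlap hF hE'F hEF hneE (p1+1) (p2+1)
            (cell_sub_R (by first | (simp; omega) | simp)) (cell_sub_S (by first | (simp; omega) | simp))
        · exact no_overlap hF hE'F hEF hneE (p1+1) (p2+1)
            (cell_sub_R (by first | (simp; omega) | simp)) (cell_sub_S (by first | (simp; omega) | simp))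
        · exact no_overlap hF hE'F hEF hneE (p1+2) p2
            (cell_sub_R (by first | (simp; omega) | simp)) (cell_sub_S (by first | (simp; omega) | simp))
        · exact no_overlap hF hE'F hp hneP p1 p2
            (cell_sub_R (by first | (simp; omega) | simp)) (cell_sub_R (by first | (simp; omega) | simp))
      · have hneP : Smol q' ≠ Rmol (p1, p2) := fun h => hynotp (h ▸ hyE')
        have hneE : Smol q' ≠ Smol (p1+1+2, p2+1-2) := fun h => hynotE (h ▸ hyE')
        rcases Smol_half.mp hyE' with rfl | rfl | rfl | rfl
        · exact no_overlap hF hE'F hp hneP p1 (p2+2)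
            (cell_sub_S (by first | (simp; omega) | simp)) (cell_sub_R (by first | (simp; omega) | simp))
        · exact no_overlap hF hE'F hp hneP p1 (p2+1)
            (cell_sub_S (by first | (simp; omega) | simp)) (cell_sub_R (by first | (simp; omega) | simp))
        · exact no_overlap hF hE'F hp hneP p1 p2
            (cell_sub_S (by first | (simp; omega) | simp)) (cell_sub_R (by first | (simp; omega) | simp))
        · exact no_overlap hF hE'F hEF hneE (p1+2) p2
            (cell_sub_S (by first | (simp; omega) | simp)) (cell_sub_S (by first | (simp; omega) | simp))

lemma Rmol_subset_osq {p : ℤ × ℤ} {r : ℝ} {c : ℝ × ℝ} :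
    Rmol p ⊆ osq r c ↔
      (c.1 - r/2 < p.1 ∧ (p.1:ℝ) + 2 < c.1 + r/2 ∧ c.2 - r/2 < p.2 ∧ (p.2:ℝ) + 3 < c.2 + r/2) := by
  constructor
  · intro h
    have h1 : ((p.1:ℝ), (p.2:ℝ)) ∈ Rmol p := by
      rw [mem_Rmol]; dsimp only; left
      refine ⟨le_refl _, by linarith, le_refl _, by linarith⟩
    have h2 : ((p.1:ℝ)+2, (p.2:ℝ)+3) ∈ Rmol p := by
      rw [mem_Rmol]; dsimp only; right
      exact ⟨by linarith, le_refl _, by linarith, le_refl _⟩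
    have g1 := h h1
    have g2 := h h2
    simp only [osq, mem_prod, mem_Ioo] at g1 g2
    exact ⟨g1.1.1, g2.1.2, g1.2.1, g2.2.2⟩
  · rintro ⟨h1, h2, h3, h4⟩ x hx
    rw [mem_Rmol] at hx
    simp only [osq, mem_prod, mem_Ioo]
    rcases hx with ⟨a, b, cc, d⟩ | ⟨a, b, cc, d⟩ <;>
      exact ⟨⟨by linarith, by linarith⟩, by linarith, by linarith⟩

/-- diagonal propagation of R-molecules in a covered square: all the
translates `R(n + t(1,-1))` contained in the slightly larger square belong to the family. -/
theorem stmt6 (F : Set (Set (ℝ × ℝ))) (hF : ChiralFamily F)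
    (m : ℤ × ℤ) (k : ℕ)
    (hcov : osq (2 * k) ((m.1 : ℝ), (m.2 : ℝ)) ⊆ ⋃₀ F)
    (n : ℤ × ℤ) (hn : Rmol n ∈ F)
    (hnQ : Rmol n ⊆ osq (2 * k) ((m.1 : ℝ), (m.2 : ℝ))) :
    ∀ t : ℕ, Rmol (n.1 + t, n.2 - t) ⊆ osq (2 * k + 2) ((m.1 : ℝ), (m.2 : ℝ)) →
      Rmol (n.1 + t, n.2 - t) ∈ F := by
  obtain ⟨n1, n2⟩ := n
  obtain ⟨m1, m2⟩ := m
  simp only at *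
  -- inequalities from Rmol n ⊆ Q
  have hQ := Rmol_subset_osq.mp hnQ
  simp only at hQ
  obtain ⟨a1, a2, a3, a4⟩ := hQ
  have hk2 : (2 * (k:ℝ)) / 2 = (k:ℝ) := by ring
  rw [hk2] at a1 a2 a3 a4
  intro t
  induction t with
  | zero =>
      intro _
      simpa using hn
  | succ t ih =>
      intro hsub
      -- target inequalities, for Q' with half-side k+1
      have hT := Rmol_subset_osq.mp hsub
      simp only at hT
      obtain ⟨b1, b2, b3, b4⟩ := hT
      have hk2' : (2 * (k:ℝ) + 2) / 2 = (k:ℝ) + 1 := by ring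
      rw [hk2'] at b1 b2 b3 b4
      push_cast at b1 b2 b3 b4
      -- previous molecule is inside Q'
      have hprev : Rmol (n1 + (t:ℤ), n2 - (t:ℤ)) ⊆
          osq (2 * k + 2) ((m1 : ℝ), (m2 : ℝ)) := by
        rw [Rmol_subset_osq]
        simp only
        rw [hk2']
        push_cast
        have ht0 : (0:ℝ) ≤ (t:ℝ) := Nat.cast_nonneg t
        refine ⟨by linarith, by linarith, by linarith, by linarith⟩
      have hmem := ih hprev
      -- integer bounds for the target molecule (inside Q')
      have i1 : (m1:ℤ) - ((k+1 : ℕ):ℤ) < n1 + ((t+1 : ℕ):ℤ) := by exact_mod_cast b1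
      have i2 : n1 + ((t+1 : ℕ):ℤ) + 2 < m1 + ((k+1 : ℕ):ℤ) := by exact_mod_cast b2
      have i4 : (m2:ℤ) - ((k+1 : ℕ):ℤ) < n2 - ((t+1 : ℕ):ℤ) := by exact_mod_cast b3
      have i5 : n2 - ((t+1 : ℕ):ℤ) + 3 < m2 + ((k+1 : ℕ):ℤ) := by exact_mod_cast b4
      -- the two needed points are inside Q
      have hx : (((n1 + (t:ℤ) + 1 : ℤ):ℝ) + 1/2, ((n2 - (t:ℤ) - 1 + 2 : ℤ):ℝ) + 1/2)
          ∈ osq (2 * k) ((m1:ℝ), (m2:ℝ)) := by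
        simp only [osq, mem_prod, mem_Ioo]
        rw [hk2]
        push_cast
        have j1 : ((m1:ℝ) - k) ≤ n1 + t + 1 := by exact_mod_cast (by omega : (m1:ℤ) - k ≤ n1 + t + 1)
        have j2 : ((n1:ℝ) + t + 1 + 1) ≤ m1 + k := by exact_mod_cast (by omega : (n1:ℤ) + t + 1 + 1 ≤ m1 + k)
        have j3 : ((m2:ℝ) - k) ≤ n2 - t - 1 := by exact_mod_cast (by omega : (m2:ℤ) - k ≤ n2 - t - 1)
        have j4 : ((n2:ℝ) - t - 1 + 3) ≤ m2 + k := by exact_mod_cast (by omega : (n2:ℤ) - t - 1 + 3 ≤ m2 + k)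
        refine ⟨⟨by linarith, by linarith⟩, by linarith, by linarith⟩
      have hy : (((n1 + (t:ℤ) + 1 : ℤ):ℝ) + 1/2, ((n2 - (t:ℤ) - 1 + 1 : ℤ):ℝ) + 1/2)
          ∈ osq (2 * k) ((m1:ℝ), (m2:ℝ)) := by
        simp only [osq, mem_prod, mem_Ioo]
        rw [hk2]
        push_cast
        have j1 : ((m1:ℝ) - k) ≤ n1 + t + 1 := by exact_mod_cast (by omega : (m1:ℤ) - k ≤ n1 + t + 1)
        have j2 : ((n1:ℝ) + t + 1 + 1) ≤ m1 + k := by exact_mod_cast (by omega : (n1:ℤ) + t + 1 + 1 ≤ m1 + k)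
        have j3 : ((m2:ℝ) - k) ≤ n2 - t - 1 := by exact_mod_cast (by omega : (m2:ℤ) - k ≤ n2 - t - 1)
        have j4 : ((n2:ℝ) - t - 1 + 3) ≤ m2 + k := by exact_mod_cast (by omega : (n2:ℤ) - t - 1 + 3 ≤ m2 + k)
        refine ⟨⟨by linarith, by linarith⟩, by linarith, by linarith⟩
      have := step hF (n1 + (t:ℤ)) (n2 - (t:ℤ)) hmem
        (by
          have hp : ((n1 + (t:ℤ)) + 1 : ℤ) = n1 + t + 1 := by ring
          have hq : ((n2 - (t:ℤ)) + 1 : ℤ) = n2 - t - 1 + 2 := by ring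
          rw [hp, hq]
          exact hcov hx)
        (by
          have hq : (n2 - (t:ℤ) : ℤ) = n2 - t - 1 + 1 := by ring
          have hp : ((n1 + (t:ℤ)) + 1 : ℤ) = n1 + t + 1 := by ring
          rw [hp, hq]
          exact hcov hy)
      have he : ((n1 + (t:ℤ) + 1 : ℤ), (n2 - (t:ℤ) - 1 : ℤ)) =
          ((n1 + ((t:ℕ)+1 : ℕ) : ℤ), (n2 - ((t:ℕ)+1 : ℕ) : ℤ)) := by
        simp only [Prod.mk.injEq]; push_cast; constructor <;> ring
      rw [he] at this
      convert this using 3 <;> push_cast <;> ring
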